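/- If θ̂ interpolates the training data (Xθ̂ = y) then the empirical adversarial risk satisfies R^adv(θ̂; δ) = (1/n)∑ᵢ(|yᵢ - xᵢᵀθ̂| + δ‖θ̂‖_*)² = δ²‖θ̂‖_*², and consequently √(R^adv_*(θ̂; δ_test)) - √(R_*(θ̂)) ≤ (δ_test/δ̄)·√(R^adv(θ̂; δ̄)) for any δ_test > 0 and δ̄ > 0, where R^adv_* and R_* are the population adversarial and standard risks. -/

import Mathlib

open Matrix MeasureTheory

/-- The dual norm `‖θ‖_* = sup_{‖x‖ ≤ 1} |θᵀx|` of a norm `N` on `ℝ^p`. -/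
noncomputable def dualNorm {p : ℕ} (N : (Fin p → ℝ) → ℝ) (θ : Fin p → ℝ) : ℝ :=
  sSup {v | ∃ x : Fin p → ℝ, N x ≤ 1 ∧ v = |θ ⬝ᵥ x|}

/-- The adversarial training risk `(1/n) ∑ᵢ (|yᵢ - xᵢᵀθ| + δ‖θ‖_*)²`. -/
noncomputable def advRisk {n p : ℕ} (N : (Fin p → ℝ) → ℝ)
    (X : Matrix (Fin n) (Fin p) ℝ) (y : Fin n → ℝ) (δ : ℝ) (θ : Fin p → ℝ) : ℝ :=
  (1 / n : ℝ) * ∑ i, (|y i - X i ⬝ᵥ θ| + δ * dualNorm N θ) ^ 2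

/-!
On the training set the residuals of an interpolator vanish, so each term of the adversarial
risk is `(δ̄‖θ̂‖_*)²`. On the test side, a perturbation with `‖Δx‖ ≤ δ` moves the prediction by at
most `δ‖θ̂‖_*`, so the adversarial loss is dominated by `(|y₀ - x₀ᵀθ̂| + δ‖θ̂‖_*)²`, and Minkowski's
inequality in `L²` gives `√R^adv_* ≤ √R_* + δ_test‖θ̂‖_* = √R_* + (δ_test/δ̄)√R^adv`.
-/

section NormAxioms

variable {E : Type*} [AddCommGroup E] [Module ℝ E]

def AddGroupNorm.ofAbsHomogeneous (N : E → ℝ) (hN_eq : ∀ v, N v = 0 ↔ v = 0)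
    (hN_smul : ∀ (a : ℝ) v, N (a • v) = |a| * N v) (hN_add : ∀ v w, N (v + w) ≤ N v + N w) :
    AddGroupNorm E where
  toFun := N
  map_zero' := (hN_eq 0).mpr rfl
  add_le' := hN_add
  neg' v := by simpa using hN_smul (-1) v
  eq_zero_of_map_eq_zero' v := (hN_eq v).mp

theorem LinearMap.exists_abs_le_mul_addGroupNorm [FiniteDimensional ℝ E] (N : AddGroupNorm E)
    (hN_smul : ∀ (a : ℝ) v, N (a • v) = |a| * N v) (f : E →ₗ[ℝ] ℝ) :
    ∃ C, 0 ≤ C ∧ ∀ x, |f x| ≤ C * N x := by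
  let _ : NormedAddCommGroup E := N.toNormedAddCommGroup
  let _ : NormedSpace ℝ E := ⟨fun a v => (hN_smul a v).le⟩
  exact ⟨‖LinearMap.toContinuousLinearMap f‖, norm_nonneg _,
    (LinearMap.toContinuousLinearMap f).le_opNorm⟩

end NormAxioms

section DualNorm

variable {p : ℕ}

theorem dualNorm_nonneg (N : (Fin p → ℝ) → ℝ) (θ : Fin p → ℝ) : 0 ≤ dualNorm N θ :=
  Real.sSup_nonneg <| by rintro _ ⟨x, -, rfl⟩; exact abs_nonneg _

theorem bddAbove_dualNorm_set (N : AddGroupNorm (Fin p → ℝ))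
    (hN_smul : ∀ (a : ℝ) v, N (a • v) = |a| * N v) (θ : Fin p → ℝ) :
    BddAbove {v | ∃ x : Fin p → ℝ, N x ≤ 1 ∧ v = |θ ⬝ᵥ x|} := by
  obtain ⟨C, hC0, hC⟩ := LinearMap.exists_abs_le_mul_addGroupNorm N hN_smul
    (dotProductBilin ℝ ℝ θ)
  refine ⟨C, ?_⟩
  rintro _ ⟨x, hx, rfl⟩
  calc |θ ⬝ᵥ x| ≤ C * N x := hC x
    _ ≤ C := mul_le_of_le_one_right hC0 hx

theorem abs_dotProduct_le_dualNorm_mul (N : AddGroupNorm (Fin p → ℝ))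
    (hN_smul : ∀ (a : ℝ) v, N (a • v) = |a| * N v) (θ x : Fin p → ℝ) :
    |θ ⬝ᵥ x| ≤ dualNorm N θ * N x := by
  rcases eq_or_ne x 0 with rfl | hx
  · simp
  have hNx : 0 < N x := map_pos_of_ne_zero N hx
  have hunit : N ((N x)⁻¹ • x) = 1 := by
    rw [hN_smul, abs_of_pos (inv_pos.mpr hNx), inv_mul_cancel₀ hNx.ne']
  have hle : (N x)⁻¹ * |θ ⬝ᵥ x| ≤ dualNorm N θ := by
    refine le_csSup (bddAbove_dualNorm_set N hN_smul θ) ⟨_, hunit.le, ?_⟩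
    rw [dotProduct_smul, smul_eq_mul, abs_mul, abs_of_pos (inv_pos.mpr hNx)]
  rwa [inv_mul_le_iff₀ hNx, mul_comm] at hle

theorem sSup_sq_sub_dotProduct_add_le (N : AddGroupNorm (Fin p → ℝ))
    (hN_smul : ∀ (a : ℝ) v, N (a • v) = |a| * N v) (δ r : ℝ) (x θ : Fin p → ℝ) :
    sSup {v | ∃ Δx : Fin p → ℝ, N Δx ≤ δ ∧ v = (r - (x + Δx) ⬝ᵥ θ) ^ 2} ≤
      (|r - x ⬝ᵥ θ| + δ * dualNorm N θ) ^ 2 := by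
  refine Real.sSup_le ?_ (sq_nonneg _)
  rintro _ ⟨Δx, hΔx, rfl⟩
  have hshift : |Δx ⬝ᵥ θ| ≤ δ * dualNorm N θ := calc
    |Δx ⬝ᵥ θ| ≤ dualNorm N θ * N Δx := by
      rw [dotProduct_comm]; exact abs_dotProduct_le_dualNorm_mul N hN_smul θ Δx
    _ ≤ dualNorm N θ * δ := mul_le_mul_of_nonneg_left hΔx (dualNorm_nonneg N θ)
    _ = δ * dualNorm N θ := mul_comm _ _
  have habs : |r - (x + Δx) ⬝ᵥ θ| ≤ |r - x ⬝ᵥ θ| + δ * dualNorm N θ := calc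
    |r - (x + Δx) ⬝ᵥ θ| = |(r - x ⬝ᵥ θ) - Δx ⬝ᵥ θ| := by rw [add_dotProduct, sub_add_eq_sub_sub]
    _ ≤ |r - x ⬝ᵥ θ| + |Δx ⬝ᵥ θ| := abs_sub _ _
    _ ≤ |r - x ⬝ᵥ θ| + δ * dualNorm N θ := by gcongr
  rw [← sq_abs]
  exact pow_le_pow_left₀ (abs_nonneg _) habs 2

theorem advRisk_of_mulVec_eq {n : ℕ} (hn : 0 < n) (N : (Fin p → ℝ) → ℝ)
    (X : Matrix (Fin n) (Fin p) ℝ) (y : Fin n → ℝ) (δ : ℝ) (θ : Fin p → ℝ)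
    (hinterp : X *ᵥ θ = y) : advRisk N X y δ θ = δ ^ 2 * dualNorm N θ ^ 2 := by
  have hres : ∀ i, y i - X i ⬝ᵥ θ = 0 := fun i => by
    rw [← hinterp, sub_eq_zero]; rfl
  have hn' : (n : ℝ) ≠ 0 := Nat.cast_ne_zero.mpr hn.ne'
  simp only [advRisk, hres, abs_zero, zero_add, Finset.sum_const, Finset.card_univ,
    Fintype.card_fin, nsmul_eq_mul]
  field_simp

end DualNorm

section SecondMoment

variable {Ω : Type*} [MeasurableSpace Ω] {μ : Measure Ω} {f : Ω → ℝ}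

theorem memLp_two_abs_of_integrable_sq (hf : Integrable (fun ω => f ω ^ 2) μ) :
    MemLp (fun ω => |f ω|) 2 μ := by
  have hmeas : AEStronglyMeasurable (fun ω => |f ω|) μ := by
    simpa only [Real.sqrt_sq_eq_abs] using
      hf.aestronglyMeasurable.aemeasurable.sqrt.aestronglyMeasurable
  exact (memLp_two_iff_integrable_sq hmeas).mpr (by simpa only [sq_abs] using hf)

theorem sq_integral_abs_le_integral_sq [IsProbabilityMeasure μ]
    (hf : Integrable (fun ω => f ω ^ 2) μ) : (∫ ω, |f ω| ∂μ) ^ 2 ≤ ∫ ω, f ω ^ 2 ∂μ := by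
  have hvar := ProbabilityTheory.variance_nonneg (fun ω => |f ω|) μ
  rw [ProbabilityTheory.variance_eq_sub (memLp_two_abs_of_integrable_sq hf)] at hvar
  simpa only [Pi.pow_apply, sq_abs, sub_nonneg] using hvar

theorem sqrt_integral_le_sqrt_integral_sq_add [IsProbabilityMeasure μ] {g : Ω → ℝ} {c : ℝ}
    (hc : 0 ≤ c) (hf : Integrable (fun ω => f ω ^ 2) μ) (hg0 : ∀ ω, 0 ≤ g ω)
    (hgf : ∀ ω, g ω ≤ (|f ω| + c) ^ 2) :
    √(∫ ω, g ω ∂μ) ≤ √(∫ ω, f ω ^ 2 ∂μ) + c := by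
  have hcross : Integrable (fun ω => 2 * c * |f ω|) μ :=
    ((memLp_two_abs_of_integrable_sq hf).integrable one_le_two).const_mul _
  have hexpand : (fun ω => (|f ω| + c) ^ 2) = fun ω => f ω ^ 2 + 2 * c * |f ω| + c ^ 2 := by
    funext ω; rw [add_sq, sq_abs]; ring
  have hsum : Integrable (fun ω => f ω ^ 2 + 2 * c * |f ω|) μ := hf.add hcross
  have hmaj : Integrable (fun ω => (|f ω| + c) ^ 2) μ := by
    rw [hexpand]; exact hsum.add (integrable_const _)
  have hint : ∫ ω, (|f ω| + c) ^ 2 ∂μ = ∫ ω, f ω ^ 2 ∂μ + 2 * c * ∫ ω, |f ω| ∂μ + c ^ 2 := by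
    rw [hexpand, integral_add hsum (integrable_const _), integral_add hf hcross,
      integral_const_mul, integral_const, probReal_univ, one_smul]
  have hsq0 : 0 ≤ ∫ ω, f ω ^ 2 ∂μ := integral_nonneg fun ω => sq_nonneg _
  have hmean : ∫ ω, |f ω| ∂μ ≤ √(∫ ω, f ω ^ 2 ∂μ) :=
    Real.le_sqrt_of_sq_le (sq_integral_abs_le_integral_sq hf)
  calc √(∫ ω, g ω ∂μ) ≤ √(∫ ω, (|f ω| + c) ^ 2 ∂μ) :=
        Real.sqrt_le_sqrt (integral_mono_of_nonneg (.of_forall hg0) hmaj (.of_forall hgf))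
    _ ≤ √((√(∫ ω, f ω ^ 2 ∂μ) + c) ^ 2) := by
        refine Real.sqrt_le_sqrt ?_
        rw [hint, add_sq, Real.sq_sqrt hsq0]
        linarith [mul_le_mul_of_nonneg_left hmean hc]
    _ = √(∫ ω, f ω ^ 2 ∂μ) + c := Real.sqrt_sq (by positivity)

end SecondMoment

theorem stmt9_general {n p : ℕ} (hn : 0 < n) (N : (Fin p → ℝ) → ℝ)
    (hN_eq : ∀ v, N v = 0 ↔ v = 0)
    (hN_smul : ∀ (a : ℝ) v, N (a • v) = |a| * N v)
    (hN_add : ∀ v w, N (v + w) ≤ N v + N w)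
    (X : Matrix (Fin n) (Fin p) ℝ) (y : Fin n → ℝ)
    (θh : Fin p → ℝ) (hinterp : X *ᵥ θh = y)
    (δtest δbar : ℝ) (hδtest : 0 < δtest) (hδbar : 0 < δbar)
    {Ω : Type*} [MeasurableSpace Ω] (μ : Measure Ω) [IsProbabilityMeasure μ]
    (x0 : Ω → Fin p → ℝ) (y0 : Ω → ℝ)
    (hg : Integrable (fun ω => (y0 ω - x0 ω ⬝ᵥ θh) ^ 2) μ) :
    advRisk N X y δbar θh = δbar ^ 2 * dualNorm N θh ^ 2 ∧
    Real.sqrt (∫ ω,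
        sSup {v | ∃ Δx : Fin p → ℝ, N Δx ≤ δtest ∧ v = (y0 ω - (x0 ω + Δx) ⬝ᵥ θh) ^ 2} ∂μ) -
      Real.sqrt (∫ ω, (y0 ω - x0 ω ⬝ᵥ θh) ^ 2 ∂μ) ≤
      (δtest / δbar) * Real.sqrt (advRisk N X y δbar θh) := by
  have hrisk := advRisk_of_mulVec_eq hn N X y δbar θh hinterp
  have hD := dualNorm_nonneg N θh
  have hrhs : δtest / δbar * √(advRisk N X y δbar θh) = δtest * dualNorm N θh := by
    rw [hrisk, ← mul_pow, Real.sqrt_sq (by positivity)]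
    field_simp
  refine ⟨hrisk, ?_⟩
  rw [hrhs, sub_le_iff_le_add']
  refine sqrt_integral_le_sqrt_integral_sq_add (by positivity) hg
    (fun ω => Real.sSup_nonneg ?_) (fun ω => ?_)
  · rintro _ ⟨Δx, -, rfl⟩
    exact sq_nonneg _
  · exact sSup_sq_sub_dotProduct_add_le (AddGroupNorm.ofAbsHomogeneous N hN_eq hN_smul hN_add)
      hN_smul δtest (y0 ω) (x0 ω) θh

theorem stmt9 {n p : ℕ} (hn : 0 < n) (N : (Fin p → ℝ) → ℝ)
    (hN_eq : ∀ v, N v = 0 ↔ v = 0)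
    (hN_smul : ∀ (a : ℝ) v, N (a • v) = |a| * N v)
    (hN_add : ∀ v w, N (v + w) ≤ N v + N w)
    (X : Matrix (Fin n) (Fin p) ℝ) (y : Fin n → ℝ)
    (θh : Fin p → ℝ) (hinterp : X *ᵥ θh = y)
    (δtest δbar : ℝ) (hδtest : 0 < δtest) (hδbar : 0 < δbar)
    {Ω : Type*} [MeasurableSpace Ω] (μ : Measure Ω) [IsProbabilityMeasure μ]
    (x0 : Ω → Fin p → ℝ) (y0 : Ω → ℝ)
    (hg : Integrable (fun ω => (y0 ω - x0 ω ⬝ᵥ θh) ^ 2) μ)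
    (hg1 : Integrable (fun ω => |y0 ω - x0 ω ⬝ᵥ θh|) μ)
    (hf : Integrable (fun ω =>
      sSup {v | ∃ Δx : Fin p → ℝ, N Δx ≤ δtest ∧ v = (y0 ω - (x0 ω + Δx) ⬝ᵥ θh) ^ 2}) μ) :
    advRisk N X y δbar θh = δbar ^ 2 * dualNorm N θh ^ 2 ∧
    Real.sqrt (∫ ω,
        sSup {v | ∃ Δx : Fin p → ℝ, N Δx ≤ δtest ∧ v = (y0 ω - (x0 ω + Δx) ⬝ᵥ θh) ^ 2} ∂μ) -
      Real.sqrt (∫ ω, (y0 ω - x0 ω ⬝ᵥ θh) ^ 2 ∂μ) ≤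
      (δtest / δbar) * Real.sqrt (advRisk N X y δbar θh) :=
  stmt9_general hn N hN_eq hN_smul hN_add X y θh hinterp δtest δbar hδtest hδbar μ x0 y0 hg
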